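/- Let J_c ~ Poisson(c^{−2}) and consider the critical Poisson-shift experiment (law(J_c), law(1 + J_c)) and the Gaussian shift experiment (N(0,1), N(c,1)). For every fixed ε ≥ 0 there exists a finite constant C_ε such that for all sufficiently small c > 0, |δ_{law(1+J_c) ‖ law(J_c)}(ε) − δ_{N(c,1) ‖ N(0,1)}(ε)| ≤ C_ε · c. -/

import Mathlib

/-!
Since `e^ε ≥ 1`, both privacy curves lie between `0` and the total variation distance of their
experiment, so it suffices that both distances are `O(c)`. When the density ratio of `Q` to `P`
crosses `1` only once, at the boundary of `S`, the excess `Q A - P A` is largest for `A = S`.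
For the Gaussians `S = (c/2, ∞)` and the excess is `N(0,1)(-c/2, c/2] ≤ c`; for the Poisson shift
`S = (⌊r⌋₊, ∞)` and the excess is the mode weight `Po(r){⌊r⌋₊}`, which is at most `e / √r = e c`.
-/

open MeasureTheory ProbabilityTheory

/-- The privacy curve of the binary experiment `(P,Q)`:
`δ_{Q‖P}(ε) = sup_{A measurable} (Q(A) − e^ε P(A))`. -/
noncomputable def privCurve {X : Type*} [MeasurableSpace X] (P Q : Measure X) (ε : ℝ) : ℝ :=
  ⨆ A : {A : Set X // MeasurableSet A}, ((Q A.1).toReal - Real.exp ε * (P A.1).toReal)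

/-- The Poisson distribution on `ℕ` with mean `r ≥ 0`. -/
noncomputable def poissonMeasure (r : ℝ) : Measure ℕ :=
  Measure.sum fun k : ℕ =>
    (ENNReal.ofReal (Real.exp (-r) * r ^ k / (Nat.factorial k))) • Measure.dirac k

open Set
open scoped NNReal ENNReal

lemma privCurve_nonneg {X : Type*} [MeasurableSpace X] (P Q : Measure X) (ε : ℝ) :
    0 ≤ privCurve P Q ε :=
  Real.iSup_nonneg' ⟨⟨∅, .empty⟩, by simp⟩

lemma privCurve_le_of_measureReal_le {X : Type*} [MeasurableSpace X] {P Q : Measure X}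
    {ε D : ℝ} (hε : 0 ≤ ε) (h : ∀ A, MeasurableSet A → Q.real A ≤ P.real A + D) :
    privCurve P Q ε ≤ D := by
  have : Nonempty {A : Set X // MeasurableSet A} := ⟨⟨∅, .empty⟩⟩
  refine ciSup_le fun A ↦ ?_
  have hQ := h A.1 A.2
  have hP : 0 ≤ P.real A.1 := measureReal_nonneg
  have : 1 ≤ Real.exp ε := Real.one_le_exp hε
  change Q.real A.1 - Real.exp ε * P.real A.1 ≤ D
  nlinarith

lemma measureReal_sub_le_of_restrict_le {α : Type*} [MeasurableSpace α] {μ ν : Measure α}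
    [IsFiniteMeasure μ] [IsFiniteMeasure ν] {s A : Set α} (hs : MeasurableSet s)
    (hA : MeasurableSet A) (h_compl : ν.restrict sᶜ ≤ μ.restrict sᶜ)
    (h_on : μ.restrict s ≤ ν.restrict s) :
    ν.real A - μ.real A ≤ ν.real s - μ.real s := by
  have hAs : ν.real (A \ s) ≤ μ.real (A \ s) := by
    have := h_compl A
    rw [Measure.restrict_apply' hs.compl, Measure.restrict_apply' hs.compl, ← sdiff_eq] at this
    exact ENNReal.toReal_mono (measure_ne_top _ _) this
  have hsA : μ.real (s \ A) ≤ ν.real (s \ A) := by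
    have := h_on Aᶜ
    rw [Measure.restrict_apply' hs, Measure.restrict_apply' hs, inter_comm, ← sdiff_eq] at this
    exact ENNReal.toReal_mono (measure_ne_top _ _) this
  have hνA := measureReal_inter_add_sdiff (μ := ν) (s := A) hs
  have hμA := measureReal_inter_add_sdiff (μ := μ) (s := A) hs
  have hνs := measureReal_inter_add_sdiff (μ := ν) (s := s) hA
  have hμs := measureReal_inter_add_sdiff (μ := μ) (s := s) hA
  rw [inter_comm s A] at hνs hμs
  linarith

lemma MeasureTheory.Measure.restrict_le_restrict_of_forall_singleton {α : Type*}
    [MeasurableSpace α] [Countable α] [MeasurableSingletonClass α] {μ ν : Measure α} {s : Set α}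
    (h : ∀ a ∈ s, μ {a} ≤ ν {a}) : μ.restrict s ≤ ν.restrict s := by
  rw [← Measure.sum_smul_dirac (μ.restrict s), ← Measure.sum_smul_dirac (ν.restrict s)]
  refine Measure.le_iff.2 fun t ht ↦ ?_
  simp only [Measure.sum_apply _ ht, Measure.smul_apply, smul_eq_mul]
  refine ENNReal.tsum_le_tsum fun a ↦ mul_le_mul_left ?_ _
  by_cases ha : a ∈ s
  · simpa [ha] using h a ha
  · simp [ha]

section Gaussian

variable {μ₁ μ₂ : ℝ} {v : ℝ≥0}

lemma gaussianPDFReal_le_of_le_midpoint (h₁₂ : μ₁ ≤ μ₂) {x : ℝ} (hx : x ≤ (μ₁ + μ₂) / 2) :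
    gaussianPDFReal μ₂ v x ≤ gaussianPDFReal μ₁ v x := by
  simp only [gaussianPDFReal]
  gcongr _ * Real.exp (-?_ / _)
  nlinarith

lemma gaussianPDFReal_le_of_midpoint_le (h₁₂ : μ₁ ≤ μ₂) {x : ℝ} (hx : (μ₁ + μ₂) / 2 ≤ x) :
    gaussianPDFReal μ₁ v x ≤ gaussianPDFReal μ₂ v x := by
  simp only [gaussianPDFReal]
  gcongr _ * Real.exp (-?_ / _)
  nlinarith

lemma gaussianReal_restrict_Iic_midpoint_le (hv : v ≠ 0) (h₁₂ : μ₁ ≤ μ₂) :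
    (gaussianReal μ₂ v).restrict (Iic ((μ₁ + μ₂) / 2)) ≤
      (gaussianReal μ₁ v).restrict (Iic ((μ₁ + μ₂) / 2)) := by
  simp only [gaussianReal_of_var_ne_zero _ hv, restrict_withDensity measurableSet_Iic]
  refine withDensity_mono <| ae_restrict_of_forall_mem measurableSet_Iic fun x hx ↦ ?_
  exact ENNReal.ofReal_le_ofReal (gaussianPDFReal_le_of_le_midpoint h₁₂ hx)

lemma gaussianReal_restrict_Ioi_midpoint_le (hv : v ≠ 0) (h₁₂ : μ₁ ≤ μ₂) :
    (gaussianReal μ₁ v).restrict (Ioi ((μ₁ + μ₂) / 2)) ≤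
      (gaussianReal μ₂ v).restrict (Ioi ((μ₁ + μ₂) / 2)) := by
  simp only [gaussianReal_of_var_ne_zero _ hv, restrict_withDensity measurableSet_Ioi]
  refine withDensity_mono <| ae_restrict_of_forall_mem measurableSet_Ioi fun x hx ↦ ?_
  exact ENNReal.ofReal_le_ofReal (gaussianPDFReal_le_of_midpoint_le h₁₂ (le_of_lt hx))

lemma gaussianPDFReal_one_le_one (μ x : ℝ) : gaussianPDFReal μ 1 x ≤ 1 := by
  have hsqrt : 1 ≤ √(2 * Real.pi) := Real.one_le_sqrt.2 (by linarith [Real.pi_gt_three])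
  have hexp : Real.exp (-(x - μ) ^ 2 / 2) ≤ 1 :=
    Real.exp_le_one_iff.2 (div_nonpos_of_nonpos_of_nonneg (by nlinarith) zero_le_two)
  simp only [gaussianPDFReal, NNReal.coe_one, mul_one]
  calc (√(2 * Real.pi))⁻¹ * Real.exp (-(x - μ) ^ 2 / 2) ≤ 1 * 1 := by
        gcongr
        exact inv_le_one_of_one_le₀ hsqrt
    _ = 1 := one_mul 1

lemma gaussianReal_one_le_volume (μ : ℝ) : gaussianReal μ 1 ≤ volume := by
  rw [gaussianReal_of_var_ne_zero _ one_ne_zero]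
  conv_rhs => rw [← withDensity_one (μ := volume)]
  exact withDensity_mono <| .of_forall fun x ↦ by
    simpa [gaussianPDF] using gaussianPDFReal_one_le_one μ x

lemma gaussianReal_measureReal_le_add {c : ℝ} (hc : 0 ≤ c) {A : Set ℝ} (hA : MeasurableSet A) :
    (gaussianReal c 1).real A ≤ (gaussianReal 0 1).real A + c := by
  have h_compl := gaussianReal_restrict_Iic_midpoint_le one_ne_zero hc
  have h_on := gaussianReal_restrict_Ioi_midpoint_le one_ne_zero hc
  rw [zero_add, ← compl_Ioi] at h_compl
  rw [zero_add] at h_on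
  have key := measureReal_sub_le_of_restrict_le measurableSet_Ioi hA h_compl h_on
  have h_shift :
      (gaussianReal c 1).real (Ioi (c / 2)) = (gaussianReal 0 1).real (Ioi (-(c / 2))) := by
    rw [← zero_add c, ← gaussianReal_map_add_const, map_measureReal_apply (measurable_add_const _)
      measurableSet_Ioi]
    congr 1
    ext x
    simp only [mem_preimage, mem_Ioi]
    constructor <;> intro <;> linarith
  have h_split : (gaussianReal 0 1).real (Ioi (-(c / 2))) =
      (gaussianReal 0 1).real (Ioc (-(c / 2)) (c / 2)) + (gaussianReal 0 1).real (Ioi (c / 2)) := by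
    rw [← Ioc_union_Ioi_eq_Ioi (a := -(c / 2)) (b := c / 2) (by linarith),
      measureReal_union (Ioc_disjoint_Ioi le_rfl) measurableSet_Ioi]
  have h_mid : (gaussianReal 0 1).real (Ioc (-(c / 2)) (c / 2)) ≤ c := by
    calc (gaussianReal 0 1).real (Ioc (-(c / 2)) (c / 2))
        ≤ volume.real (Ioc (-(c / 2)) (c / 2)) :=
          ENNReal.toReal_mono (by simp) (gaussianReal_one_le_volume 0 _)
      _ = c := by simp [Real.volume_real_Ioc, hc]
  linarith

end Gaussian

section Poisson

variable {r : ℝ≥0}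

lemma poissonMeasure_real_singleton_succ (r : ℝ≥0) (n : ℕ) :
    Po(r).real {n + 1} = Po(r).real {n} * (r / (n + 1)) := by
  simp only [poissonMeasure_real_singleton, Nat.factorial_succ]
  push_cast
  field_simp
  ring

lemma poissonMeasure_real_singleton_le_succ {n : ℕ} (hn : (n : ℝ) + 1 ≤ r) :
    Po(r).real {n} ≤ Po(r).real {n + 1} := by
  rw [poissonMeasure_real_singleton_succ]
  exact le_mul_of_one_le_right measureReal_nonneg ((one_le_div (by positivity)).2 hn)

lemma poissonMeasure_real_singleton_succ_le {n : ℕ} (hn : (r : ℝ) ≤ n + 1) :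
    Po(r).real {n + 1} ≤ Po(r).real {n} := by
  rw [poissonMeasure_real_singleton_succ]
  exact mul_le_of_le_one_right measureReal_nonneg ((div_le_one (by positivity)).2 hn)

lemma MeasureTheory.Measure.map_add_one_singleton_zero (μ : Measure ℕ) :
    μ.map (· + 1) {0} = 0 := by
  rw [Measure.map_apply (measurable_add_const 1) (measurableSet_singleton 0)]
  convert measure_empty (μ := μ)
  ext n
  simp

lemma MeasureTheory.Measure.map_add_one_singleton_succ (μ : Measure ℕ) (n : ℕ) :
    μ.map (· + 1) {n + 1} = μ {n} := by
  rw [Measure.map_apply (measurable_add_const 1) (measurableSet_singleton _)]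
  congr 1
  ext k
  simp

lemma poissonMeasure_map_add_one_measureReal_le_add (r : ℝ≥0) (A : Set ℕ) :
    (Po(r).map (· + 1)).real A ≤ Po(r).real A + Po(r).real {⌊(r : ℝ)⌋₊} := by
  set m := ⌊(r : ℝ)⌋₊
  have h_compl : (Po(r).map (· + 1)).restrict (Ioi m)ᶜ ≤ Po(r).restrict (Ioi m)ᶜ := by
    refine Measure.restrict_le_restrict_of_forall_singleton fun k hk ↦ ?_
    rcases k with _ | k
    · simp [Measure.map_add_one_singleton_zero]
    · rw [Measure.map_add_one_singleton_succ]
      have hkm : ((k + 1 : ℕ) : ℝ) ≤ m := by exact_mod_cast notMem_Ioi.1 hk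
      have hk : (k : ℝ) + 1 ≤ r := by push_cast at hkm; linarith [Nat.floor_le r.coe_nonneg]
      exact (ENNReal.toReal_le_toReal (measure_ne_top _ _) (measure_ne_top _ _)).1
        (poissonMeasure_real_singleton_le_succ hk)
  have h_on : Po(r).restrict (Ioi m) ≤ (Po(r).map (· + 1)).restrict (Ioi m) := by
    refine Measure.restrict_le_restrict_of_forall_singleton fun k hk ↦ ?_
    obtain ⟨k, rfl⟩ := Nat.exists_eq_add_one_of_ne_zero (Nat.ne_zero_of_lt hk)
    rw [Measure.map_add_one_singleton_succ]
    have hkm : (m : ℝ) ≤ k := by exact_mod_cast Nat.lt_add_one_iff.1 hk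
    have hk : (r : ℝ) ≤ k + 1 := by linarith [Nat.lt_floor_add_one (r : ℝ)]
    exact (ENNReal.toReal_le_toReal (measure_ne_top _ _) (measure_ne_top _ _)).1
      (poissonMeasure_real_singleton_succ_le hk)
  have key := measureReal_sub_le_of_restrict_le measurableSet_Ioi
    (MeasurableSet.of_discrete (s := A)) h_compl h_on
  rw [map_measureReal_apply (measurable_add_const 1) measurableSet_Ioi] at key
  have : (· + 1) ⁻¹' Ioi m = {m} ∪ Ioi m := by
    ext k
    simp only [mem_preimage, mem_Ioi, mem_union, mem_singleton_iff]
    omega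
  rw [this, measureReal_union (by simp) measurableSet_Ioi] at key
  linarith

lemma poissonMeasure_real_singleton_le_one_add_inv_pow_mul (hr : 0 < r) {n j : ℕ}
    (hn : (n : ℝ) ≤ r) (hj : (j : ℝ) ≤ √r) :
    Po(r).real {n} ≤ (1 + (√r)⁻¹) ^ j * Po(r).real {n + j} := by
  induction j with
  | zero => simp
  | succ j ih =>
    have hs : 0 < √(r : ℝ) := Real.sqrt_pos.2 hr
    push_cast at hj
    have h_ratio : 1 ≤ (1 + (√r)⁻¹) * (r / ((n + j : ℕ) + 1)) := by
      have h_sqrt : (1 + (√r)⁻¹) * r = r + √r := by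
        field_simp
        linear_combination -Real.sq_sqrt r.coe_nonneg
      rw [mul_div_assoc', le_div_iff₀ (by positivity), one_mul, h_sqrt]
      push_cast
      linarith
    calc Po(r).real {n} ≤ (1 + (√r)⁻¹) ^ j * Po(r).real {n + j} := ih (by linarith)
      _ ≤ (1 + (√r)⁻¹) ^ j * Po(r).real {n + j} * ((1 + (√r)⁻¹) * (r / ((n + j : ℕ) + 1))) :=
          le_mul_of_one_le_right (by positivity) h_ratio
      _ = (1 + (√r)⁻¹) ^ (j + 1) * Po(r).real {n + (j + 1)} := by
          rw [← add_assoc, poissonMeasure_real_singleton_succ]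
          ring

lemma one_add_inv_pow_le_exp_one {s : ℝ} (hs : 0 < s) {j : ℕ} (hj : (j : ℝ) ≤ s) :
    (1 + s⁻¹) ^ j ≤ Real.exp 1 :=
  calc (1 + s⁻¹) ^ j ≤ Real.exp s⁻¹ ^ j := by
        gcongr
        linarith [Real.add_one_le_exp s⁻¹]
    _ = Real.exp (j / s) := by rw [← Real.exp_nat_mul, div_eq_mul_inv]
    _ ≤ Real.exp 1 := Real.exp_le_exp.2 ((div_le_one hs).2 hj)

-- The `⌊√r⌋₊ + 1` weights from `n` on are each at least `Po(r){n} / e` and sum to at most `1`.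
lemma poissonMeasure_real_singleton_le_exp_one_div_sqrt (hr : 0 < r) {n : ℕ}
    (hn : (n : ℝ) ≤ r) : Po(r).real {n} ≤ Real.exp 1 / √r := by
  have hs : 0 < √(r : ℝ) := Real.sqrt_pos.2 hr
  set J := ⌊√(r : ℝ)⌋₊
  have h_near :
      ∀ j ∈ Finset.range (J + 1), Po(r).real {n} ≤ Real.exp 1 * Po(r).real {n + j} := by
    intro j hj
    have hjs : (j : ℝ) ≤ √r :=
      (Nat.cast_le.2 (Finset.mem_range_succ_iff.1 hj)).trans (Nat.floor_le hs.le)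
    calc Po(r).real {n} ≤ (1 + (√r)⁻¹) ^ j * Po(r).real {n + j} :=
          poissonMeasure_real_singleton_le_one_add_inv_pow_mul hr hn hjs
      _ ≤ Real.exp 1 * Po(r).real {n + j} := by
          gcongr
          exact one_add_inv_pow_le_exp_one hs hjs
  have h_mass : ∑ j ∈ Finset.range (J + 1), Po(r).real {n + j} ≤ 1 := by
    calc ∑ j ∈ Finset.range (J + 1), Po(r).real {n + j}
        = ∑ k ∈ Finset.Ico n (n + (J + 1)), Po(r).real {k} := by
          rw [Finset.sum_Ico_eq_sum_range, Nat.add_sub_cancel_left]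
      _ = Po(r).real (Finset.Ico n (n + (J + 1)) : Set ℕ) := sum_measureReal_singleton _
      _ ≤ 1 := measureReal_le_one
  have h_count : ((J : ℝ) + 1) * Po(r).real {n} ≤ Real.exp 1 := by
    calc ((J : ℝ) + 1) * Po(r).real {n} = ∑ j ∈ Finset.range (J + 1), Po(r).real {n} := by
          simp
      _ ≤ ∑ j ∈ Finset.range (J + 1), Real.exp 1 * Po(r).real {n + j} :=
          Finset.sum_le_sum h_near
      _ ≤ Real.exp 1 * 1 := by rw [← Finset.mul_sum]; gcongr
      _ = Real.exp 1 := mul_one _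
  rw [le_div_iff₀ hs]
  nlinarith [Nat.lt_floor_add_one √(r : ℝ), measureReal_nonneg (μ := Po(r)) (s := {n})]

end Poisson

/-- Boundary privacy-curve convergence (Corollary 8.2): the privacy curve of the
critical Poisson-shift experiment `(Poi(c^{−2}), 1 + Poi(c^{−2}))` is within
`C_ε · c` of the privacy curve of the Gaussian shift experiment `(N(0,1), N(c,1))`,
for all sufficiently small `c > 0`. -/
theorem boundary_privacy_curve_convergence (ε : ℝ) (hε : 0 ≤ ε) :
    ∃ Cε : ℝ, ∃ c₀ : ℝ, 0 < c₀ ∧ ∀ c ∈ Set.Ioc (0 : ℝ) c₀,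
      |privCurve (poissonMeasure (c ^ (-2 : ℤ)))
          (Measure.map (fun k => k + 1) (poissonMeasure (c ^ (-2 : ℤ)))) ε -
        privCurve (gaussianReal 0 1) (gaussianReal c 1) ε| ≤ Cε * c := by
  refine ⟨Real.exp 1, 1, one_pos, fun c ⟨hc, _⟩ ↦ ?_⟩
  let r : ℝ≥0 := ⟨c ^ (-2 : ℤ), by positivity⟩
  have hr : 0 < r := show (0 : ℝ) < c ^ (-2 : ℤ) by positivity
  have h_sqrt : √(r : ℝ) = c⁻¹ := by
    rw [show (r : ℝ) = c⁻¹ ^ 2 from (zpow_neg c 2).trans (by rw [inv_pow, zpow_ofNat]),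
      Real.sqrt_sq (by positivity)]
  have h_poisson : privCurve Po(r) (Po(r).map (· + 1)) ε ≤ Real.exp 1 * c := by
    refine privCurve_le_of_measureReal_le hε fun A _ ↦ ?_
    have h_mode :=
      poissonMeasure_real_singleton_le_exp_one_div_sqrt hr (Nat.floor_le r.coe_nonneg)
    rw [h_sqrt, div_inv_eq_mul] at h_mode
    linarith [poissonMeasure_map_add_one_measureReal_le_add r A]
  have h_gauss : privCurve (gaussianReal 0 1) (gaussianReal c 1) ε ≤ Real.exp 1 * c := by
    refine privCurve_le_of_measureReal_le hε fun A hA ↦ ?_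
    have : c ≤ Real.exp 1 * c := le_mul_of_one_le_left hc.le (Real.one_le_exp zero_le_one)
    linarith [gaussianReal_measureReal_le_add hc.le hA]
  exact abs_sub_le_of_nonneg_of_le (privCurve_nonneg _ _ _) h_poisson
    (privCurve_nonneg _ _ _) h_gauss
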